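/- Let n ≥ 1, let V be a bicompatible subgroup of S([n]^2), let a, b ∈ [n] lie in the same connected component of the graph G_R, let c ∈ [n], and let v ∈ V. Then v(c,a) and v(c,b) lie in the same row of [n]², i.e. the first coordinates of v(c,a) and v(c,b) are equal. -/

import Mathlib

/-- The permutation `u ⊗ 1` of `[n]³`, acting as `(x,y,z) ↦ (u(x,y), z)`. -/
def tensorOne {n : ℕ} (u : Equiv.Perm (Fin n × Fin n)) :
    Equiv.Perm (Fin n × Fin n × Fin n) :=
  (Equiv.prodAssoc (Fin n) (Fin n) (Fin n)).permCongr (u.prodCongr (Equiv.refl (Fin n)))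

/-- The permutation `1 ⊗ u` of `[n]³`, acting as `(x,y,z) ↦ (x, u(y,z))`. -/
def oneTensor {n : ℕ} (u : Equiv.Perm (Fin n × Fin n)) :
    Equiv.Perm (Fin n × Fin n × Fin n) :=
  (Equiv.refl (Fin n)).prodCongr u

/-- `u` is compatible with `v` if `(v ⊗ 1)(1 ⊗ u) = (1 ⊗ u)(v ⊗ 1)` in `S([n]³)`. -/
def Compatible {n : ℕ} (u v : Equiv.Perm (Fin n × Fin n)) : Prop :=
  tensorOne v * oneTensor u = oneTensor u * tensorOne v

/-- The graph `G_R` on `[n]` attached to a subgroup `V ≤ S([n]²)`: distinct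
`a, b` are adjacent iff some `v ∈ V` maps some point of row `a` to a point of
row `b`. -/
def GR {n : ℕ} (V : Subgroup (Equiv.Perm (Fin n × Fin n))) : SimpleGraph (Fin n) where
  Adj a b := a ≠ b ∧ ∃ x y : Fin n, ∃ v ∈ V, v (a, x) = (b, y)
  symm := by
    constructor
    rintro a b ⟨hab, x, y, v, hv, hvab⟩
    refine ⟨hab.symm, y, x, v⁻¹, V.inv_mem hv, ?_⟩
    rw [← hvab]
    simp
  loopless := ⟨fun a h => h.1 rfl⟩

/-- The graph `G_C` on `[n]` attached to a subgroup `V ≤ S([n]²)`: distinct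
`a, b` are adjacent iff some `v ∈ V` maps some point of column `a` to a point
of column `b`. -/
def GC {n : ℕ} (V : Subgroup (Equiv.Perm (Fin n × Fin n))) : SimpleGraph (Fin n) where
  Adj a b := a ≠ b ∧ ∃ x y : Fin n, ∃ v ∈ V, v (x, a) = (y, b)
  symm := by
    constructor
    rintro a b ⟨hab, x, y, v, hv, hvab⟩
    refine ⟨hab.symm, y, x, v⁻¹, V.inv_mem hv, ?_⟩
    rw [← hvab]
    simp
  loopless := ⟨fun a h => h.1 rfl⟩

/-!
Evaluating the compatibility of `u` with `v` at `(c, a, x)` and reading off first coordinates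
shows that `v (c, ·)` sends `a` and `b` to the same row whenever `u (a, x) = (b, y)`. So the row
of `v (c, a)` is constant along the edges of `G_R`, hence on its connected components.
-/

@[simp]
theorem tensorOne_apply {n : ℕ} (u : Equiv.Perm (Fin n × Fin n)) (x y z : Fin n) :
    tensorOne u (x, y, z) = ((u (x, y)).1, (u (x, y)).2, z) := rfl

@[simp]
theorem oneTensor_apply {n : ℕ} (u : Equiv.Perm (Fin n × Fin n)) (x y z : Fin n) :
    oneTensor u (x, y, z) = (x, u (y, z)) := rfl

theorem Compatible.fst_apply_eq {n : ℕ} {u v : Equiv.Perm (Fin n × Fin n)}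
    (h : Compatible u v) {a b x y : Fin n} (hu : u (a, x) = (b, y)) (c : Fin n) :
    (v (c, b)).1 = (v (c, a)).1 := by
  simpa [hu] using congrArg Prod.fst (Equiv.Perm.ext_iff.mp h (c, a, x))

theorem SimpleGraph.Reachable.apply_eq_of_adj {α β : Type*} {G : SimpleGraph α} {f : α → β}
    (hf : ∀ a b, G.Adj a b → f a = f b) {a b : α} (h : G.Reachable a b) : f a = f b := by
  rw [SimpleGraph.reachable_eq_reflTransGen] at h
  exact Relation.reflTransGen_eq_self (r := @Eq β) ▸ Relation.ReflTransGen.lift f hf _ _ h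

theorem GR.fst_apply_eq_of_adj {n : ℕ} {V : Subgroup (Equiv.Perm (Fin n × Fin n))}
    {v : Equiv.Perm (Fin n × Fin n)} (hv : ∀ u ∈ V, Compatible u v) {a b : Fin n}
    (hab : (GR V).Adj a b) (c : Fin n) : (v (c, a)).1 = (v (c, b)).1 := by
  obtain ⟨-, x, y, u, hu, hux⟩ := hab
  exact ((hv u hu).fst_apply_eq hux c).symm

theorem stmt_15_general (n : ℕ)
    (V : Subgroup (Equiv.Perm (Fin n × Fin n)))
    (hV : ∀ u ∈ V, ∀ v ∈ V, Compatible u v)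
    (a b : Fin n) (hab : (GR V).Reachable a b) (c : Fin n)
    (v : Equiv.Perm (Fin n × Fin n)) (hv : v ∈ V) :
    (v (c, a)).1 = (v (c, b)).1 :=
  hab.apply_eq_of_adj fun _ _ h => GR.fst_apply_eq_of_adj (fun u hu => hV u hu v hv) h c

theorem stmt_15 (n : ℕ) (hn : 1 ≤ n)
    (V : Subgroup (Equiv.Perm (Fin n × Fin n)))
    (hV : ∀ u ∈ V, ∀ v ∈ V, Compatible u v)
    (a b : Fin n) (hab : (GR V).Reachable a b) (c : Fin n)
    (v : Equiv.Perm (Fin n × Fin n)) (hv : v ∈ V) :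
    (v (c, a)).1 = (v (c, b)).1 :=
  stmt_15_general n V hV a b hab c v hv
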